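/- For a bounded linear operator X on a complex Hilbert space and any real number θ, the numerical radius of the block operator matrix [[0, X],[e^{iθ}X, 0]] on H ⊕ H equals w(X). -/

import Mathlib

open scoped InnerProductSpace
open ContinuousLinearMap Metric

/-- The numerical radius of a bounded operator on a complex Hilbert space. -/
noncomputable def numRadius {H : Type*} [NormedAddCommGroup H] [InnerProductSpace ℂ H]
    (T : H →L[ℂ] H) : ℝ :=
  sSup {r : ℝ | ∃ x : H, ‖x‖ = 1 ∧ r = ‖(inner ℂ (T x) x : ℂ)‖}

/-- The block operator `[[0, X], [Y, 0]]` acting on `H ⊕ H` (with the `ℓ²` Hilbert space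
structure) by `(x, y) ↦ (X y, Y x)`. -/
noncomputable def blockOp {H : Type*} [NormedAddCommGroup H] [InnerProductSpace ℂ H]
    (X Y : H →L[ℂ] H) : WithLp 2 (H × H) →L[ℂ] WithLp 2 (H × H) :=
  ((WithLp.prodContinuousLinearEquiv 2 ℂ H H).symm.toContinuousLinearMap) ∘L
    ((X ∘L ContinuousLinearMap.snd ℂ H H).prod (Y ∘L ContinuousLinearMap.fst ℂ H H)) ∘L
    ((WithLp.prodContinuousLinearEquiv 2 ℂ H H).toContinuousLinearMap)

/-- `A` is a `G₁` operator: `‖(z - A)⁻¹‖ = 1 / dist (z, σ(A))` for all `z ∉ σ(A)`. -/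
def IsG1 {H : Type*} [NormedAddCommGroup H] [InnerProductSpace ℂ H] [CompleteSpace H]
    (A : H →L[ℂ] H) : Prop :=
  ∀ z : ℂ, z ∉ spectrum ℂ A →
    ‖Ring.inverse (algebraMap ℂ (H →L[ℂ] H) z - A)‖ = 1 / Metric.infDist z (spectrum ℂ A)

/-- The distance between two subsets of `ℂ`. -/
noncomputable def setDist (s t : Set ℂ) : ℝ :=
  sInf {d : ℝ | ∃ z ∈ s, ∃ w ∈ t, d = dist z w}

/-- The Riesz–Dunford functional calculus `f(A)` for `f` analytic on the unit disk and
`σ(A) ⊂ 𝔻`, realized through the Taylor expansion of `f` at `0`. -/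
noncomputable def dunford {H : Type*} [NormedAddCommGroup H] [InnerProductSpace ℂ H]
    [CompleteSpace H] (f : ℂ → ℂ) (A : H →L[ℂ] H) : H →L[ℂ] H :=
  ∑' n : ℕ, (iteratedDeriv n f 0 / n.factorial) • A ^ n

/-- The modulus `|C| = (C*C)^{1/2}` of a bounded operator. -/
noncomputable def opAbs {H : Type*} [NormedAddCommGroup H] [InnerProductSpace ℂ H]
    [CompleteSpace H] (C : H →L[ℂ] H) : H →L[ℂ] H :=
  CFC.sqrt (ContinuousLinearMap.adjoint C * C)

/-!
With `a = e^{iθ/2}`, the unitary `diag(1, a)` on `H ⊕ H` intertwines `[[0, X], [a²X, 0]]` with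
`a • [[0, X], [X, 0]]`. The numerical radius is invariant under unitary equivalence and scales
by `‖a‖ = 1`, so it remains to see `w([[0, X], [X, 0]]) = w(X)`. The quadratic form of the
block operator is `⟪X y, x⟫ + ⟪X x, y⟫ = ½ (⟪X (x + y), x + y⟫ - ⟪X (x - y), x - y⟫)`, which the
parallelogram law bounds by `w(X) (‖x‖² + ‖y‖²)`; the bound is attained along `(x, x) / √2`.
-/

section NumericalRadius

variable {E F : Type*} [NormedAddCommGroup E] [InnerProductSpace ℂ E]
  [NormedAddCommGroup F] [InnerProductSpace ℂ F]

lemma numRadius_nonneg (T : E →L[ℂ] E) : 0 ≤ numRadius T :=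
  Real.sSup_nonneg (by rintro r ⟨x, -, rfl⟩; positivity)

lemma numRadius_le (T : E →L[ℂ] E) {c : ℝ} (hc : 0 ≤ c)
    (h : ∀ x : E, ‖x‖ = 1 → ‖⟪T x, x⟫_ℂ‖ ≤ c) : numRadius T ≤ c :=
  Real.sSup_le (by rintro r ⟨x, hx, rfl⟩; exact h x hx) hc

lemma bddAbove_numRadius_set (T : E →L[ℂ] E) :
    BddAbove {r : ℝ | ∃ x : E, ‖x‖ = 1 ∧ r = ‖⟪T x, x⟫_ℂ‖} := by
  refine ⟨‖T‖, ?_⟩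
  rintro r ⟨x, hx, rfl⟩
  calc ‖⟪T x, x⟫_ℂ‖ ≤ ‖T x‖ * ‖x‖ := norm_inner_le_norm _ _
    _ ≤ ‖T‖ := by simpa [hx] using T.le_opNorm x

lemma norm_inner_le_numRadius (T : E →L[ℂ] E) {x : E} (hx : ‖x‖ = 1) :
    ‖⟪T x, x⟫_ℂ‖ ≤ numRadius T :=
  le_csSup (bddAbove_numRadius_set T) ⟨x, hx, rfl⟩

lemma norm_inner_le_numRadius_mul_sq (T : E →L[ℂ] E) (x : E) :
    ‖⟪T x, x⟫_ℂ‖ ≤ numRadius T * ‖x‖ ^ 2 := by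
  rcases eq_or_ne x 0 with rfl | hx
  · simp
  have hx' : ‖x‖ ≠ 0 := norm_ne_zero_iff.mpr hx
  have hunit : ‖((‖x‖⁻¹ : ℝ) : ℂ) • x‖ = 1 := by
    rw [norm_smul, Complex.norm_real, norm_inv, norm_norm, inv_mul_cancel₀ hx']
  have h := norm_inner_le_numRadius T hunit
  rw [map_smul, inner_smul_left, inner_smul_right, Complex.conj_ofReal, norm_mul, norm_mul,
    Complex.norm_real, norm_inv, norm_norm, ← mul_assoc, ← mul_inv, ← sq,
    inv_mul_le_iff₀ (by positivity)] at h
  linarith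

lemma numRadius_smul (c : ℂ) (T : E →L[ℂ] E) : numRadius (c • T) = ‖c‖ * numRadius T := by
  rw [numRadius, numRadius, ← smul_eq_mul, ← Real.sSup_smul_of_nonneg (norm_nonneg c)]
  congr 1
  ext r
  simp [Set.mem_smul_set, eq_comm, mul_comm]

lemma numRadius_eq_of_comp_eq (U : F ≃ₗᵢ[ℂ] E) {T : E →L[ℂ] E} {S : F →L[ℂ] F}
    (hTS : T ∘L (U : F →L[ℂ] E) = (U : F →L[ℂ] E) ∘L S) : numRadius T = numRadius S := by
  have hquad (y : F) : ⟪T (U y), U y⟫_ℂ = ⟪S y, y⟫_ℂ := by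
    rw [← U.inner_map_map]
    exact congrArg (⟪·, U y⟫_ℂ) (DFunLike.congr_fun hTS y)
  unfold numRadius
  congr 1
  ext r
  constructor
  · rintro ⟨x, hx, rfl⟩
    exact ⟨U.symm x, by simpa using hx, by simpa using congrArg norm (hquad (U.symm x))⟩
  · rintro ⟨y, hy, rfl⟩
    exact ⟨U y, by simpa using hy, by rw [hquad]⟩

end NumericalRadius

@[simps! apply]
noncomputable def LinearIsometryEquiv.smulOfNormEqOne {𝕜 E : Type*} [NormedField 𝕜]
    [SeminormedAddCommGroup E] [NormedSpace 𝕜 E] (a : 𝕜) (ha : ‖a‖ = 1) : E ≃ₗᵢ[𝕜] E where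
  __ := LinearEquiv.smulOfNeZero 𝕜 E a (norm_ne_zero_iff.mp (ha.symm ▸ one_ne_zero))
  norm_map' x := by simp [norm_smul, ha]

section BlockOperator

variable {H : Type*} [NormedAddCommGroup H] [InnerProductSpace ℂ H]

lemma blockOp_apply (X Y : H →L[ℂ] H) (z : WithLp 2 (H × H)) :
    blockOp X Y z = WithLp.toLp 2 (X z.snd, Y z.fst) :=
  rfl

lemma inner_blockOp_apply_self (X Y : H →L[ℂ] H) (z : WithLp 2 (H × H)) :
    ⟪blockOp X Y z, z⟫_ℂ = ⟪X z.snd, z.fst⟫_ℂ + ⟪Y z.fst, z.snd⟫_ℂ :=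
  rfl

lemma norm_inner_add_inner_le_numRadius (X : H →L[ℂ] H) (u v : H) :
    ‖⟪X v, u⟫_ℂ + ⟪X u, v⟫_ℂ‖ ≤ numRadius X * (‖u‖ ^ 2 + ‖v‖ ^ 2) := by
  have hpolar : (2 : ℂ) * (⟪X v, u⟫_ℂ + ⟪X u, v⟫_ℂ) =
      ⟪X (u + v), u + v⟫_ℂ - ⟪X (u - v), u - v⟫_ℂ := by
    simp only [map_add, map_sub, inner_add_left, inner_add_right, inner_sub_left,
      inner_sub_right]
    ring
  have hpar : ‖u + v‖ ^ 2 + ‖u - v‖ ^ 2 = 2 * (‖u‖ ^ 2 + ‖v‖ ^ 2) := by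
    have := parallelogram_law_with_norm ℂ u v
    nlinarith
  have h2 : 2 * ‖⟪X v, u⟫_ℂ + ⟪X u, v⟫_ℂ‖ ≤ 2 * (numRadius X * (‖u‖ ^ 2 + ‖v‖ ^ 2)) :=
    calc 2 * ‖⟪X v, u⟫_ℂ + ⟪X u, v⟫_ℂ‖
        = ‖⟪X (u + v), u + v⟫_ℂ - ⟪X (u - v), u - v⟫_ℂ‖ := by
          rw [← hpolar, norm_mul, Complex.norm_ofNat]
      _ ≤ ‖⟪X (u + v), u + v⟫_ℂ‖ + ‖⟪X (u - v), u - v⟫_ℂ‖ := norm_sub_le _ _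
      _ ≤ numRadius X * ‖u + v‖ ^ 2 + numRadius X * ‖u - v‖ ^ 2 :=
          add_le_add (norm_inner_le_numRadius_mul_sq X _) (norm_inner_le_numRadius_mul_sq X _)
      _ = 2 * (numRadius X * (‖u‖ ^ 2 + ‖v‖ ^ 2)) := by rw [← mul_add, hpar]; ring
  linarith

lemma numRadius_blockOp_self (X : H →L[ℂ] H) : numRadius (blockOp X X) = numRadius X := by
  apply le_antisymm
  · refine numRadius_le _ (numRadius_nonneg X) fun z hz => ?_
    have hz' : ‖z.fst‖ ^ 2 + ‖z.snd‖ ^ 2 = 1 := by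
      rw [← WithLp.prod_norm_sq_eq_of_L2, hz, one_pow]
    rw [inner_blockOp_apply_self]
    simpa [hz'] using norm_inner_add_inner_le_numRadius X z.fst z.snd
  · refine numRadius_le _ (numRadius_nonneg _) fun x hx => ?_
    set c : ℂ := (((√2)⁻¹ : ℝ) : ℂ)
    set z : WithLp 2 (H × H) := WithLp.toLp 2 (c • x, c • x)
    have hz : ‖z‖ = 1 := by
      rw [← pow_eq_one_iff_of_nonneg (norm_nonneg z) two_ne_zero, WithLp.prod_norm_sq_eq_of_L2]
      norm_num [z, c, norm_smul, hx]
    have hc : starRingEnd ℂ c * c = 2⁻¹ := by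
      simp only [c, Complex.conj_ofReal, ← Complex.ofReal_mul, ← mul_inv,
        Real.mul_self_sqrt zero_le_two]
      norm_num
    have hquad : ⟪blockOp X X z, z⟫_ℂ = ⟪X x, x⟫_ℂ := by
      rw [inner_blockOp_apply_self]
      simp only [z, WithLp.toLp_fst, WithLp.toLp_snd, map_smul, inner_smul_left, inner_smul_right]
      linear_combination 2 * ⟪X x, x⟫_ℂ * hc
    simpa [hquad] using norm_inner_le_numRadius (blockOp X X) hz

lemma blockOp_comp_diag (X : H →L[ℂ] H) (a : ℂ) (ha : ‖a‖ = 1) :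
    let U : WithLp 2 (H × H) ≃ₗᵢ[ℂ] WithLp 2 (H × H) :=
      LinearIsometryEquiv.withLpProdCongr 2 (LinearIsometryEquiv.refl ℂ H)
        (LinearIsometryEquiv.smulOfNormEqOne a ha)
    blockOp X ((a * a) • X) ∘L (U : WithLp 2 (H × H) →L[ℂ] WithLp 2 (H × H)) =
      (U : WithLp 2 (H × H) →L[ℂ] WithLp 2 (H × H)) ∘L (a • blockOp X X) := by
  ext z
  simp [blockOp_apply, ← WithLp.toLp_smul, mul_smul]

end BlockOperator

theorem stmt6_general {H : Type*} [NormedAddCommGroup H] [InnerProductSpace ℂ H] (X : H →L[ℂ] H) (θ : ℝ) :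
    numRadius (blockOp X (Complex.exp (θ * Complex.I) • X)) = numRadius X := by
  set a := Complex.exp (↑(θ / 2) * Complex.I)
  have ha : ‖a‖ = 1 := Complex.norm_exp_ofReal_mul_I _
  have hsq : a * a = Complex.exp (θ * Complex.I) := by
    rw [← Complex.exp_add]
    push_cast
    ring_nf
  rw [← hsq, numRadius_eq_of_comp_eq _ (blockOp_comp_diag X a ha), numRadius_smul, ha, one_mul,
    numRadius_blockOp_self]

theorem stmt6 {H : Type*} [NormedAddCommGroup H] [InnerProductSpace ℂ H] [CompleteSpace H] (X : H →L[ℂ] H) (θ : ℝ) :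
    numRadius (blockOp X (Complex.exp (θ * Complex.I) • X)) = numRadius X :=
  stmt6_general X θ
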